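/- State-space to VARX conversion with explicit matrices. Let A ∈ ℝ^{n_x×n_x}, B ∈ ℝ^{n_x×n_u}, E ∈ ℝ^{n_x×n_w}, C ∈ ℝ^{n_y×n_x}, let ℓ ≥ 1, and let O = col(C, CA, …, CA^{ℓ−1}) ∈ ℝ^{ℓn_y×n_x} have rank n_x, so that OᵀO is invertible; set O† := (OᵀO)^{−1}Oᵀ. For D ∈ {B, E} define 𝒞(D) := [A^{ℓ−1}D, …, AD, D] and let ℳ(D) be the ℓ×ℓ block matrix whose (i,j) block (i,j = 0,…,ℓ−1) equals C A^{i−j−1} D if i > j and 0 otherwise. Set Â := C A^ℓ O†, B̂ := C(𝒞(B) − A^ℓ O† ℳ(B)), Ê := C(𝒞(E) − A^ℓ O† ℳ(E)). Then every trajectory of the state-space dynamics — sequences x_k ∈ ℝ^{n_x}, u_k ∈ ℝ^{n_u}, w_k ∈ ℝ^{n_w}, y_k ∈ ℝ^{n_y} with x_{k+1} = A x_k + B u_k + E w_k and y_k = C x_k for all k ≥ 0 — satisfies y_k = Â·col(y_{k−ℓ},…,y_{k−1}) + B̂·col(u_{k−ℓ},…,u_{k−1}) + Ê·col(w_{k−ℓ},…,w_{k−1})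 for every k ≥ ℓ. -/
import Mathlib

open Matrix

noncomputable section

/-- Order-`ℓ` observability matrix `col(C, CA, …, CA^{ℓ−1})`. -/
def obsMat {nx ny : ℕ} (A : Matrix (Fin nx) (Fin nx) ℝ)
    (C : Matrix (Fin ny) (Fin nx) ℝ) (ℓ : ℕ) : Matrix (Fin ℓ × Fin ny) (Fin nx) ℝ :=
  fun p j => (C * A ^ ((p.1 : ℕ))) p.2 j

/-- Moore–Penrose-type left inverse `O† = (OᵀO)⁻¹Oᵀ`. -/
def obsDag {nx ny : ℕ} (A : Matrix (Fin nx) (Fin nx) ℝ)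
    (C : Matrix (Fin ny) (Fin nx) ℝ) (ℓ : ℕ) : Matrix (Fin nx) (Fin ℓ × Fin ny) ℝ :=
  ((obsMat A C ℓ)ᵀ * obsMat A C ℓ)⁻¹ * (obsMat A C ℓ)ᵀ

/-- Block row `𝒞(D) = [A^{ℓ−1}D, …, AD, D]`. -/
def ctrlBlk {nx nd : ℕ} (A : Matrix (Fin nx) (Fin nx) ℝ)
    (D : Matrix (Fin nx) (Fin nd) ℝ) (ℓ : ℕ) : Matrix (Fin nx) (Fin ℓ × Fin nd) ℝ :=
  fun i p => (A ^ (ℓ - 1 - (p.1 : ℕ)) * D) i p.2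

/-- Strictly lower block-triangular matrix `ℳ(D)` with `(i,j)` block `CA^{i−j−1}D` for `i > j`. -/
def lowBlk {nx ny nd : ℕ} (A : Matrix (Fin nx) (Fin nx) ℝ)
    (C : Matrix (Fin ny) (Fin nx) ℝ) (D : Matrix (Fin nx) (Fin nd) ℝ) (ℓ : ℕ) :
    Matrix (Fin ℓ × Fin ny) (Fin ℓ × Fin nd) ℝ :=
  fun p q =>
    if (q.1 : ℕ) < (p.1 : ℕ) then (C * A ^ ((p.1 : ℕ) - (q.1 : ℕ) - 1) * D) p.2 q.2 else 0

/-- Stacked column vector `col (z_a, …, z_{a+m−1})` for ℕ-indexed data. -/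
def stkN {α : Type*} (z : ℕ → α → ℝ) (a : ℕ) (m : ℕ) : Fin m × α → ℝ :=
  fun p => z (a + (p.1 : ℕ)) p.2

private lemma mulVec_finsum {m n : ℕ} (M : Matrix (Fin m) (Fin n) ℝ) {ι : Type*} (s : Finset ι)
    (v : ι → Fin n → ℝ) : M.mulVec (∑ i ∈ s, v i) = ∑ i ∈ s, M.mulVec (v i) :=
  map_sum M.mulVecLin v s

/-- componentwise evaluation of `lowBlk` times a stacked vector -/
private lemma lowBlk_mulVec {nx ny nd ℓ : ℕ} (A : Matrix (Fin nx) (Fin nx) ℝ)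
    (C : Matrix (Fin ny) (Fin nx) ℝ) (D : Matrix (Fin nx) (Fin nd) ℝ)
    (v : ℕ → Fin nd → ℝ) (m : ℕ) (i : Fin ℓ) (r : Fin ny) :
    ((lowBlk A C D ℓ).mulVec (stkN v m ℓ)) (i, r)
      = ∑ j ∈ Finset.range (i : ℕ),
          ((C * A ^ ((i : ℕ) - 1 - j) * D).mulVec (v (m + j))) r := by
  have hiℓ : (i : ℕ) ≤ ℓ := le_of_lt i.2
  rw [Matrix.mulVec]
  show ∑ q : Fin ℓ × Fin nd, lowBlk A C D ℓ (i, r) q * stkN v m ℓ q = _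
  rw [Fintype.sum_prod_type]
  have h1 : ∀ j : Fin ℓ, ∑ s : Fin nd, lowBlk A C D ℓ (i, r) (j, s) * stkN v m ℓ (j, s)
      = if (j : ℕ) < (i : ℕ) then ((C * A ^ ((i : ℕ) - (j : ℕ) - 1) * D).mulVec (v (m + (j : ℕ)))) r else 0 := by
    intro j
    by_cases h : (j : ℕ) < (i : ℕ)
    · simp only [lowBlk, stkN, h, if_true]
      rw [Matrix.mulVec]
      rfl
    · simp [lowBlk, stkN, h]
  rw [Finset.sum_congr rfl (fun j _ => h1 j)]
  rw [Fin.sum_univ_eq_sum_range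
    (fun j => if j < (i : ℕ) then ((C * A ^ ((i : ℕ) - j - 1) * D).mulVec (v (m + j))) r else 0) ℓ]
  rw [← Finset.sum_filter]
  have hfil : (Finset.range ℓ).filter (· < (i : ℕ)) = Finset.range (i : ℕ) := by
    ext j
    simp only [Finset.mem_filter, Finset.mem_range]
    omega
  rw [hfil]
  apply Finset.sum_congr rfl
  intro j hj
  have he : (i : ℕ) - j - 1 = (i : ℕ) - 1 - j := by omega
  rw [he]

/-- componentwise evaluation of `ctrlBlk` times a stacked vector -/
private lemma ctrlBlk_mulVec {nx nd ℓ : ℕ} (A : Matrix (Fin nx) (Fin nx) ℝ)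
    (D : Matrix (Fin nx) (Fin nd) ℝ) (v : ℕ → Fin nd → ℝ) (m : ℕ) :
    (ctrlBlk A D ℓ).mulVec (stkN v m ℓ)
      = ∑ j ∈ Finset.range ℓ, (A ^ (ℓ - 1 - j) * D).mulVec (v (m + j)) := by
  funext i
  rw [Matrix.mulVec]
  show ∑ q : Fin ℓ × Fin nd, ctrlBlk A D ℓ i q * stkN v m ℓ q = _
  rw [Fintype.sum_prod_type]
  have h1 : ∀ j : Fin ℓ, ∑ s : Fin nd, ctrlBlk A D ℓ i (j, s) * stkN v m ℓ (j, s)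
      = ((A ^ (ℓ - 1 - (j : ℕ)) * D).mulVec (v (m + (j : ℕ)))) i := by
    intro j; rw [Matrix.mulVec]; rfl
  rw [Finset.sum_congr rfl (fun j _ => h1 j)]
  rw [Fin.sum_univ_eq_sum_range (fun j => ((A ^ (ℓ - 1 - j) * D).mulVec (v (m + j))) i) ℓ]
  simp [Finset.sum_apply]

private lemma obsMat_mulVec {nx ny ℓ : ℕ} (A : Matrix (Fin nx) (Fin nx) ℝ)
    (C : Matrix (Fin ny) (Fin nx) ℝ) (X : Fin nx → ℝ) (i : Fin ℓ) (r : Fin ny) :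
    ((obsMat A C ℓ).mulVec X) (i, r) = ((C * A ^ (i : ℕ)).mulVec X) r := by
  rw [Matrix.mulVec, Matrix.mulVec]; rfl

/-- State-space to VARX conversion with explicit matrices. -/
theorem stmt9 (nx nu nw ny ℓ : ℕ) (hℓ : 1 ≤ ℓ)
    (A : Matrix (Fin nx) (Fin nx) ℝ) (B : Matrix (Fin nx) (Fin nu) ℝ)
    (E : Matrix (Fin nx) (Fin nw) ℝ) (C : Matrix (Fin ny) (Fin nx) ℝ)
    (hobs : (obsMat A C ℓ).rank = nx)
    (x : ℕ → Fin nx → ℝ) (u : ℕ → Fin nu → ℝ) (w : ℕ → Fin nw → ℝ) (y : ℕ → Fin ny → ℝ)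
    (hdyn : ∀ k : ℕ, x (k + 1) = A.mulVec (x k) + B.mulVec (u k) + E.mulVec (w k))
    (hout : ∀ k : ℕ, y k = C.mulVec (x k)) :
    ∀ k : ℕ, ℓ ≤ k →
      y k = (C * A ^ ℓ * obsDag A C ℓ).mulVec (stkN y (k - ℓ) ℓ)
        + (C * (ctrlBlk A B ℓ - A ^ ℓ * obsDag A C ℓ * lowBlk A C B ℓ)).mulVec
            (stkN u (k - ℓ) ℓ)
        + (C * (ctrlBlk A E ℓ - A ^ ℓ * obsDag A C ℓ * lowBlk A C E ℓ)).mulVec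
            (stkN w (k - ℓ) ℓ) := by
  -- invertibility of OᵀO
  have hM : IsUnit ((obsMat A C ℓ)ᵀ * obsMat A C ℓ) := by
    have hr : ((obsMat A C ℓ)ᵀ * obsMat A C ℓ).rank = nx := by
      rw [Matrix.rank_transpose_mul_self]; exact hobs
    rw [← Matrix.mulVec_surjective_iff_isUnit]
    have htop : LinearMap.range ((obsMat A C ℓ)ᵀ * obsMat A C ℓ).mulVecLin = ⊤ := by
      apply Submodule.eq_top_of_finrank_eq
      rw [Matrix.rank] at hr
      simp [hr]
    intro v
    exact LinearMap.range_eq_top.mp htop v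
  have hOdagO : obsDag A C ℓ * obsMat A C ℓ = 1 := by
    rw [obsDag, Matrix.mul_assoc]
    exact Matrix.nonsing_inv_mul _ ((Matrix.isUnit_iff_isUnit_det _).mp hM)
  intro k hk
  set m := k - ℓ with hm
  have hkm : m + ℓ = k := Nat.sub_add_cancel hk
  -- state expansion
  have hstate : ∀ i : ℕ, x (m + i) = (A ^ i).mulVec (x m)
      + ∑ j ∈ Finset.range i,
          (A ^ (i - 1 - j)).mulVec (B.mulVec (u (m + j)) + E.mulVec (w (m + j))) := by
    intro i
    induction i with
    | zero => simp [Matrix.one_mulVec]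
    | succ i ih =>
      have : m + (i + 1) = (m + i) + 1 := by omega
      rw [this, hdyn (m + i), ih]
      rw [Matrix.mulVec_add, Matrix.mulVec_mulVec, mulVec_finsum]
      rw [Finset.sum_range_succ]
      have hpow : A * A ^ i = A ^ (i + 1) := by
        rw [← pow_succ']
      have hterm : ∀ j ∈ Finset.range i,
          A.mulVec ((A ^ (i - 1 - j)).mulVec (B.mulVec (u (m + j)) + E.mulVec (w (m + j))))
            = (A ^ (i + 1 - 1 - j)).mulVec (B.mulVec (u (m + j)) + E.mulVec (w (m + j))) := by
        intro j hj
        rw [Matrix.mulVec_mulVec, ← pow_succ']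
        have hje := Finset.mem_range.mp hj
        have he : i - 1 - j + 1 = i + 1 - 1 - j := by omega
        rw [he]
      rw [Finset.sum_congr rfl hterm, hpow]
      simp only [Nat.add_sub_cancel]
      rw [Nat.sub_self, pow_zero, Matrix.one_mulVec]
      abel
  -- stacked output equation
  have hY : stkN y m ℓ = (obsMat A C ℓ).mulVec (x m)
      + (lowBlk A C B ℓ).mulVec (stkN u m ℓ) + (lowBlk A C E ℓ).mulVec (stkN w m ℓ) := by
    funext p
    obtain ⟨i, r⟩ := p
    show y (m + (i : ℕ)) r = _
    rw [hout (m + (i : ℕ)), hstate (i : ℕ)]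
    rw [Matrix.mulVec_add, Matrix.mulVec_mulVec, mulVec_finsum]
    show (((C * A ^ (i : ℕ)).mulVec (x m)) + ∑ j ∈ Finset.range (i : ℕ),
        C.mulVec ((A ^ ((i : ℕ) - 1 - j)).mulVec (B.mulVec (u (m + j)) + E.mulVec (w (m + j))))) r = _
    simp only [Pi.add_apply, Finset.sum_apply]
    rw [obsMat_mulVec, lowBlk_mulVec, lowBlk_mulVec]
    have hterm : ∀ j ∈ Finset.range (i : ℕ),
        (C.mulVec ((A ^ ((i : ℕ) - 1 - j)).mulVec (B.mulVec (u (m + j)) + E.mulVec (w (m + j))))) r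
          = ((C * A ^ ((i : ℕ) - 1 - j) * B).mulVec (u (m + j))) r
            + ((C * A ^ ((i : ℕ) - 1 - j) * E).mulVec (w (m + j))) r := by
      intro j hj
      simp only [Matrix.mulVec_add, ← Matrix.mulVec_mulVec, Pi.add_apply]
    rw [Finset.sum_congr rfl hterm, Finset.sum_add_distrib]
    ring
  -- state at time k
  have hxk : x k = (A ^ ℓ).mulVec (x m)
      + (ctrlBlk A B ℓ).mulVec (stkN u m ℓ) + (ctrlBlk A E ℓ).mulVec (stkN w m ℓ) := by
    rw [← hkm, hstate ℓ, ctrlBlk_mulVec, ctrlBlk_mulVec, add_assoc, ← Finset.sum_add_distrib]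
    congr 1
    apply Finset.sum_congr rfl
    intro j hj
    simp only [Matrix.mulVec_add, ← Matrix.mulVec_mulVec]
  -- recover x m
  have hX0 : x m = (obsDag A C ℓ).mulVec
      (stkN y m ℓ - (lowBlk A C B ℓ).mulVec (stkN u m ℓ)
        - (lowBlk A C E ℓ).mulVec (stkN w m ℓ)) := by
    have h1 : stkN y m ℓ - (lowBlk A C B ℓ).mulVec (stkN u m ℓ)
        - (lowBlk A C E ℓ).mulVec (stkN w m ℓ) = (obsMat A C ℓ).mulVec (x m) := by
      rw [hY]; abel
    rw [h1, Matrix.mulVec_mulVec, hOdagO, Matrix.one_mulVec]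
  -- finish
  rw [hout k, hxk, hX0]
  simp only [Matrix.mul_sub, Matrix.sub_mulVec, ← Matrix.mulVec_mulVec, Matrix.mulVec_sub,
    Matrix.mulVec_add]
  abel
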